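/- arXiv:2406.13729 — 3 statements merged into one kernel-verified Lean document; each statement's English description precedes it below -/
import Mathlib

section
/- Let ν₀ < ν₁ be coprime positive integers, let 2 ≤ k ≤ ⌊ν₀/2⌋, and set λ₁ = (ν₀−k+1)·ν₁ − (k−1)·ν₀. Let Γ = ⟨ν₀, ν₁⟩ = { a·ν₀ + b·ν₁ : a, b ∈ ℕ } be the numerical semigroup generated by ν₀ and ν₁. Then every integer n > (ν₁−k+1)·ν₀ belongs to (Γ + ν₀) ∪ (Γ + ν₁) ∪ (Γ + λ₁). -/
/-!
By Bézout, every integer is `n = β ν₀ + α ν₁` with `0 ≤ α < ν₀`. If `β ≥ 1`, then `n - ν₀ ∈ Γ`;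
if `β = 0`, then `n > 0` forces `α ≥ 1` and `n - ν₁ ∈ Γ`. If `β < 0`, the lower bound on `n`
forces `α ≥ ν₀ - k + 1` and `β ≥ 1 - k`, and then
`n - λ₁ = (β + k - 1) ν₀ + (α - (ν₀ - k + 1)) ν₁ ∈ Γ`.
-/

def twoGenSemigroup (a b : ℤ) : Set ℤ := {m | ∃ x y : ℕ, m = (x : ℤ) * a + (y : ℤ) * b}

theorem mul_add_mul_mem_twoGenSemigroup {a b x y : ℤ} (hx : 0 ≤ x) (hy : 0 ≤ y) :
    x * a + y * b ∈ twoGenSemigroup a b := by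
  lift x to ℕ using hx
  lift y to ℕ using hy
  exact ⟨x, y, rfl⟩

theorem Int.exists_eq_mul_add_mul_of_isCoprime {a b : ℤ} (hab : IsCoprime a b) (ha : 0 < a)
    (n : ℤ) : ∃ β α : ℤ, 0 ≤ α ∧ α < a ∧ n = β * a + α * b := by
  obtain ⟨u, v, huv⟩ := hab
  refine ⟨u * n + v * n / a * b, v * n % a, Int.emod_nonneg _ ha.ne',
    Int.emod_lt_of_pos _ ha, ?_⟩
  linear_combination (-n) * huv - b * Int.mul_ediv_add_emod (v * n) a

theorem coeff_lower_bounds_of_neg_of_lt {ν₀ ν₁ k α β : ℤ} (hν₀ : 0 < ν₀) (h01 : ν₀ ≤ ν₁)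
    (hk : 0 ≤ k) (hα : α < ν₀) (hβ : β < 0)
    (hn : (ν₁ - k + 1) * ν₀ < β * ν₀ + α * ν₁) :
    ν₀ - k + 1 ≤ α ∧ 1 - k ≤ β := by
  constructor
  · by_contra! h
    nlinarith [mul_le_mul_of_nonneg_right (show β ≤ -1 by omega) hν₀.le,
      mul_le_mul_of_nonneg_right (show α ≤ ν₀ - k by omega) (hν₀.le.trans h01)]
  · by_contra! h
    nlinarith [mul_le_mul_of_nonneg_right (show β ≤ -k by omega) hν₀.le,
      mul_le_mul_of_nonneg_right (show α ≤ ν₀ - 1 by omega) (hν₀.le.trans h01)]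

/-- Every integer `n > (ν₁-k+1)ν₀` lies in `(Γ+ν₀) ∪ (Γ+ν₁) ∪ (Γ+lam1)`
where `Γ = ⟨ν₀,ν₁⟩` and `lam1 = (ν₀-k+1)ν₁ - (k-1)ν₀`. -/
theorem mem_shifted_semigroup (ν₀ ν₁ k : ℕ) (h01 : ν₀ < ν₁)
    (hcop : Nat.Coprime ν₀ ν₁) (hk2 : 2 ≤ k) (hk : 2 * k ≤ ν₀) (n : ℤ)
    (hn : n > ((ν₁ : ℤ) - k + 1) * ν₀) :
    letI Γ : Set ℤ := {m | ∃ a b : ℕ, m = (a : ℤ) * ν₀ + (b : ℤ) * ν₁}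
    letI lam1 : ℤ := ((ν₀ : ℤ) - k + 1) * ν₁ - ((k : ℤ) - 1) * ν₀
    n - (ν₀ : ℤ) ∈ Γ ∨ n - (ν₁ : ℤ) ∈ Γ ∨ n - lam1 ∈ Γ := by
  show n - ν₀ ∈ twoGenSemigroup ν₀ ν₁ ∨ n - ν₁ ∈ twoGenSemigroup ν₀ ν₁ ∨
    n - (((ν₀ : ℤ) - k + 1) * ν₁ - ((k : ℤ) - 1) * ν₀) ∈ twoGenSemigroup ν₀ ν₁
  have hν₀ : (0 : ℤ) < ν₀ := by omega
  obtain ⟨β, α, hα0, hαν₀, rfl⟩ :=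
    Int.exists_eq_mul_add_mul_of_isCoprime (Nat.isCoprime_iff_coprime.mpr hcop) hν₀ n
  rcases lt_trichotomy β 0 with hβ | rfl | hβ
  · obtain ⟨hα, hβk⟩ := coeff_lower_bounds_of_neg_of_lt hν₀ (by omega) (by omega) hαν₀ hβ hn
    have := mul_add_mul_mem_twoGenSemigroup (a := ν₀) (b := ν₁)
      (show 0 ≤ β + k - 1 by omega) (show 0 ≤ α - (ν₀ - k + 1) by omega)
    exact Or.inr (Or.inr (by convert this using 1; ring))
  · have hα : 1 ≤ α := by
      have : 0 ≤ ((ν₁ : ℤ) - k + 1) * ν₀ := mul_nonneg (by omega) hν₀.le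
      by_contra! h
      obtain rfl : α = 0 := by omega
      simp only [zero_mul, add_zero] at hn
      omega
    have := mul_add_mul_mem_twoGenSemigroup (a := ν₀) (b := ν₁) le_rfl (sub_nonneg.mpr hα)
    exact Or.inr (Or.inl (by convert this using 1; ring))
  · have := mul_add_mul_mem_twoGenSemigroup (a := ν₀) (b := ν₁)
      (sub_nonneg.mpr (show 1 ≤ β by omega)) hα0
    exact Or.inl (by convert this using 1; ring)
end

section
/- Let ν₀ < ν₁ be coprime positive integers with ν₀ ≥ 4, and let 2 ≤ k ≤ ⌊ν₀/2⌋. Set γ = (ν₀−k+1)·ν₁ − k·ν₀ and λ₁ = γ + ν₀ = (ν₀−k+1)·ν₁ − (k−1)·ν₀. Then λ₁ does not belong to (Γ + ν₀) ∪ (Γ + ν₁), where Γ = { a·ν₀ + b·ν₁ : a, b ∈ ℕ } is the numerical semigroup generated by ν₀ and ν₁. -/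
/-- With `λ₁ = (ν₀-k+1)ν₁ - (k-1)ν₀`, the value `λ₁` does not belong to
`(Γ+ν₀) ∪ (Γ+ν₁)` where `Γ = ⟨ν₀,ν₁⟩`. -/
theorem lam1_not_mem_shifted (ν₀ ν₁ k : ℕ) (h4 : 4 ≤ ν₀) (h01 : ν₀ < ν₁)
    (hcop : Nat.Coprime ν₀ ν₁) (hk2 : 2 ≤ k) (hk : 2 * k ≤ ν₀) :
    letI lam1 : ℤ := ((ν₀ : ℤ) - k + 1) * ν₁ - ((k : ℤ) - 1) * ν₀
    (¬ ∃ a b : ℕ, lam1 = (a : ℤ) * ν₀ + (b : ℤ) * ν₁ + ν₀) ∧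
    (¬ ∃ a b : ℕ, lam1 = (a : ℤ) * ν₀ + (b : ℤ) * ν₁ + ν₁) := by
  have hcopZ : IsCoprime (ν₀ : ℤ) (ν₁ : ℤ) := by
    rw [Int.isCoprime_iff_gcd_eq_one, Int.gcd_natCast_natCast]
    exact hcop
  have h0pos : (0 : ℤ) < ν₀ := by positivity
  have h1pos : (0 : ℤ) < ν₁ := by
    exact_mod_cast Nat.zero_lt_of_lt h01
  have hkZ : 2 * (k : ℤ) ≤ ν₀ := by exact_mod_cast hk
  have hk2Z : (2 : ℤ) ≤ k := by exact_mod_cast hk2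
  constructor
  · rintro ⟨a, b, hab⟩
    set t : ℤ := (ν₀ : ℤ) - k + 1 - b with ht
    have heq : t * ν₁ = ((a : ℤ) + k) * ν₀ := by linear_combination hab
    have hrhs : (0 : ℤ) < ((a : ℤ) + k) * ν₀ := by
      have : (0 : ℤ) < (a : ℤ) + k := by positivity
      positivity
    have htpos : 0 < t := by
      by_contra h
      push_neg at h
      nlinarith
    have hdvd : (ν₀ : ℤ) ∣ t := by
      have : (ν₀ : ℤ) ∣ t * ν₁ := ⟨(a : ℤ) + k, by linarith [heq]⟩
      exact (hcopZ.dvd_of_dvd_mul_right this)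
    have := Int.le_of_dvd htpos hdvd
    have hb : (0 : ℤ) ≤ b := by positivity
    linarith
  · rintro ⟨a, b, hab⟩
    set t : ℤ := (ν₀ : ℤ) - k - b with ht
    have heq : t * ν₁ = ((a : ℤ) + k - 1) * ν₀ := by linear_combination hab
    have hrhs : (0 : ℤ) < ((a : ℤ) + k - 1) * ν₀ := by
      have ha : (0 : ℤ) ≤ a := by positivity
      nlinarith
    have htpos : 0 < t := by
      by_contra h
      push_neg at h
      nlinarith
    have hdvd : (ν₀ : ℤ) ∣ t := by
      have : (ν₀ : ℤ) ∣ t * ν₁ := ⟨(a : ℤ) + k - 1, by linarith [heq]⟩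
      exact (hcopZ.dvd_of_dvd_mul_right this)
    have := Int.le_of_dvd htpos hdvd
    have hb : (0 : ℤ) ≤ b := by positivity
    linarith
end

section
/- Let ν₀ < ν₁ be coprime positive integers with ν₀ ≥ 4 and 2 ≤ k ≤ ⌊ν₀/2⌋. Let Γ be the numerical semigroup generated by ν₀ and ν₁, and set λ₋₁ = ν₀, λ₀ = ν₁, λ₁ = (ν₀−k+1)ν₁ − (k−1)ν₀, and Λ₀ = (Γ+λ₋₁) ∪ (Γ+λ₀). Then: u₂⁰ := min{ λ₁ + ν₀·n : n ≥ 1, λ₁ + ν₀·n ∈ Λ₀ } = (ν₀−k+1)·ν₁, and u₂¹ := min{ λ₁ + ν₁·n : n ≥ 1, λ₁ + ν₁·n ∈ Λ₀ } = (ν₁−k+1)·ν₀. -/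
private lemma keyZ (p q X c d : ℤ) (hcop : IsCoprime p q) (hq : 0 < q) (hp : 0 < p)
    (hX : X < p) (hd : 0 ≤ d) (hc : 0 < c) (h : X * q = c * p + d * q) : False := by
  have h2 : (X - d) * q = c * p := by linear_combination h
  have hdvd : p ∣ (X - d) := hcop.dvd_of_dvd_mul_right (h2 ▸ dvd_mul_left p c)
  have hpos : 0 < X - d := by nlinarith [mul_pos hc hp]
  have := Int.le_of_dvd hpos hdvd
  linarith

/-- Computation of the integers `u₂⁰, u₂¹` of Cano–Corral–Senovilla-Sanz:
with `Γ = ⟨ν₀,ν₁⟩`, `Λ₀ = (Γ+ν₀) ∪ (Γ+ν₁)` and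
`λ₁ = (ν₀-k+1)ν₁ - (k-1)ν₀`, one has
`min{λ₁+ν₀n : n ≥ 1, λ₁+ν₀n ∈ Λ₀} = (ν₀-k+1)ν₁` and
`min{λ₁+ν₁n : n ≥ 1, λ₁+ν₁n ∈ Λ₀} = (ν₁-k+1)ν₀`. -/
theorem u2_computation (ν₀ ν₁ k lam1 : ℕ) (h4 : 4 ≤ ν₀) (h01 : ν₀ < ν₁)
    (hcop : Nat.Coprime ν₀ ν₁) (hk2 : 2 ≤ k) (hk : 2 * k ≤ ν₀)
    (hlam : lam1 + (k - 1) * ν₀ = (ν₀ - k + 1) * ν₁) :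
    letI Γ : Set ℕ := {m | ∃ a b : ℕ, m = a * ν₀ + b * ν₁}
    letI Λ₀ : Set ℕ := {m | ∃ g ∈ Γ, m = g + ν₀ ∨ m = g + ν₁}
    sInf {m | ∃ n : ℕ, 1 ≤ n ∧ m = lam1 + ν₀ * n ∧ m ∈ Λ₀} = (ν₀ - k + 1) * ν₁ ∧
    sInf {m | ∃ n : ℕ, 1 ≤ n ∧ m = lam1 + ν₁ * n ∧ m ∈ Λ₀} = (ν₁ - k + 1) * ν₀ := by
  set K := k - 1 with hKdef
  set A := ν₀ - k + 1 with hAdef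
  set B := ν₁ - k + 1 with hBdef
  have hAK : A + K = ν₀ := by omega
  have hBK : B + K = ν₁ := by omega
  have hK1 : 1 ≤ K := by omega
  have hA1 : 1 ≤ A := by omega
  have hB1 : 1 ≤ B := by omega
  have hAp : A < ν₀ := by omega
  have hBp : B < ν₁ := by omega
  have hcopZ : IsCoprime (ν₀ : ℤ) (ν₁ : ℤ) := Nat.isCoprime_iff_coprime.mpr hcop
  have hν₀ : (0:ℤ) < ν₀ := by exact_mod_cast (by omega : 0 < ν₀)
  have hν₁ : (0:ℤ) < ν₁ := by exact_mod_cast (by omega : 0 < ν₁)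
  -- second base identity : lam1 + K*ν₁ = B*ν₀
  have hlam2 : lam1 + K * ν₁ = B * ν₀ := by
    have h1 : lam1 + K * ν₁ + K * ν₀ = B * ν₀ + K * ν₀ := by
      calc lam1 + K * ν₁ + K * ν₀ = (lam1 + K * ν₀) + K * ν₁ := by ring
        _ = A * ν₁ + K * ν₁ := by rw [hlam]
        _ = (A + K) * ν₁ := by ring
        _ = ν₀ * ν₁ := by rw [hAK]
        _ = (B + K) * ν₀ := by rw [hBK]; ring
        _ = B * ν₀ + K * ν₀ := by ring
    exact Nat.add_right_cancel h1
  have hlamZ : (lam1 : ℤ) + K * ν₀ = A * ν₁ := by exact_mod_cast hlam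
  have hlam2Z : (lam1 : ℤ) + K * ν₁ = B * ν₀ := by exact_mod_cast hlam2
  constructor
  · -- first minimum
    have hmem : A * ν₁ ∈ {m | ∃ n : ℕ, 1 ≤ n ∧ m = lam1 + ν₀ * n ∧
        ∃ g ∈ {m | ∃ a b : ℕ, m = a * ν₀ + b * ν₁}, m = g + ν₀ ∨ m = g + ν₁} := by
      refine ⟨K, hK1, by rw [mul_comm ν₀ K]; exact hlam.symm, (A - 1) * ν₁, ⟨0, A - 1, by ring⟩,
        Or.inr ?_⟩
      have hAm : A - 1 + 1 = A := by omega
      calc A * ν₁ = (A - 1 + 1) * ν₁ := by rw [hAm]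
        _ = (A - 1) * ν₁ + ν₁ := by ring
    refine le_antisymm (Nat.sInf_le hmem) (le_csInf ⟨_, hmem⟩ ?_)
    rintro m ⟨n, hn1, hmeq, g, ⟨a, b, hg⟩, hcase⟩
    rcases le_or_gt K n with hKn | hKn
    · have h1 : K * ν₀ ≤ n * ν₀ := Nat.mul_le_mul_right ν₀ hKn
      have h2 : ν₀ * n = n * ν₀ := mul_comm _ _
      linarith [hlam]
    · exfalso
      rcases hcase with hc1 | hc1
      · have hE : (lam1 : ℤ) + ν₀ * n = a * ν₀ + b * ν₁ + ν₀ := by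
          exact_mod_cast congrArg (Nat.cast : ℕ → ℤ)
            (show lam1 + ν₀ * n = a * ν₀ + b * ν₁ + ν₀ by rw [← hmeq, hc1, hg])
        exact keyZ ν₀ ν₁ A ((a:ℤ) + 1 + K - n) b hcopZ hν₁ hν₀
          (by exact_mod_cast hAp) (by positivity) (by omega)
          (by linear_combination hE - hlamZ)
      · have hE : (lam1 : ℤ) + ν₀ * n = a * ν₀ + b * ν₁ + ν₁ := by
          exact_mod_cast congrArg (Nat.cast : ℕ → ℤ)
            (show lam1 + ν₀ * n = a * ν₀ + b * ν₁ + ν₁ by rw [← hmeq, hc1, hg])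
        exact keyZ ν₀ ν₁ A ((a:ℤ) + K - n) ((b:ℤ) + 1) hcopZ hν₁ hν₀
          (by exact_mod_cast hAp) (by positivity) (by omega)
          (by linear_combination hE - hlamZ)
  · -- second minimum
    have hmem : B * ν₀ ∈ {m | ∃ n : ℕ, 1 ≤ n ∧ m = lam1 + ν₁ * n ∧
        ∃ g ∈ {m | ∃ a b : ℕ, m = a * ν₀ + b * ν₁}, m = g + ν₀ ∨ m = g + ν₁} := by
      refine ⟨K, hK1, by rw [mul_comm ν₁ K]; exact hlam2.symm, (B - 1) * ν₀, ⟨B - 1, 0, by ring⟩,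
        Or.inl ?_⟩
      have hBm : B - 1 + 1 = B := by omega
      calc B * ν₀ = (B - 1 + 1) * ν₀ := by rw [hBm]
        _ = (B - 1) * ν₀ + ν₀ := by ring
    refine le_antisymm (Nat.sInf_le hmem) (le_csInf ⟨_, hmem⟩ ?_)
    rintro m ⟨n, hn1, hmeq, g, ⟨a, b, hg⟩, hcase⟩
    rcases le_or_gt K n with hKn | hKn
    · have h1 : K * ν₁ ≤ n * ν₁ := Nat.mul_le_mul_right ν₁ hKn
      have h2 : ν₁ * n = n * ν₁ := mul_comm _ _
      linarith [hlam2]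
    · exfalso
      rcases hcase with hc1 | hc1
      · have hE : (lam1 : ℤ) + ν₁ * n = a * ν₀ + b * ν₁ + ν₀ := by
          exact_mod_cast congrArg (Nat.cast : ℕ → ℤ)
            (show lam1 + ν₁ * n = a * ν₀ + b * ν₁ + ν₀ by rw [← hmeq, hc1, hg])
        exact keyZ ν₁ ν₀ B ((b:ℤ) + K - n) ((a:ℤ) + 1) hcopZ.symm hν₀ hν₁
          (by exact_mod_cast hBp) (by positivity) (by omega)
          (by linear_combination hE - hlam2Z)
      · have hE : (lam1 : ℤ) + ν₁ * n = a * ν₀ + b * ν₁ + ν₁ := by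
          exact_mod_cast congrArg (Nat.cast : ℕ → ℤ)
            (show lam1 + ν₁ * n = a * ν₀ + b * ν₁ + ν₁ by rw [← hmeq, hc1, hg])
        exact keyZ ν₁ ν₀ B ((b:ℤ) + 1 + K - n) a hcopZ.symm hν₀ hν₁
          (by exact_mod_cast hBp) (by positivity) (by omega)
          (by linear_combination hE - hlam2Z)
end
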